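/- arXiv:2409.12298 — 3 statements merged into one kernel-verified Lean document; each statement's English description precedes it below -/
import Mathlib

section
/- Let X ∈ ℝ^{m×n} have rank r̲, and let X† be its Moore–Penrose inverse. Then for every Z ∈ ℝ^{m×n}, the matrix XX†Z + ZX†X − XX†ZX†X is the orthogonal projection (in Frobenius inner product) of Z onto the subspace ℝ^{m×m}X + Xℝ^{n×n}, and (I_m − XX†)Z(I_n − X†X) is the orthogonal projection of Z onto the orthogonal complement of that subspace. -/
open Matrix

attribute [local instance] Matrix.frobeniusNormedAddCommGroup Matrix.frobeniusNormedSpace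

abbrev Mat (m n : ℕ) := Matrix (Fin m) (Fin n) ℝ

/-- Frobenius inner product `⟨X, Y⟩ = tr (Yᵀ X)`. -/
noncomputable def froInner {m n : ℕ} (X Y : Mat m n) : ℝ := Matrix.trace (Yᵀ * X)

/-- A cone: closed under multiplication by nonnegative scalars. -/
def IsConeSet {m n : ℕ} (C : Set (Mat m n)) : Prop :=
  ∀ Y ∈ C, ∀ a : ℝ, 0 ≤ a → a • Y ∈ C

/-- The set of projections (nearest points in Frobenius norm) of `X` onto `C`. -/
noncomputable def projSet {m n : ℕ} (C : Set (Mat m n)) (X : Mat m n) : Set (Mat m n) :=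
  {Y | Y ∈ C ∧ ∀ Z ∈ C, ‖X - Y‖ ≤ ‖X - Z‖}

/-- Frobenius distance from `X` to the set `C`. -/
noncomputable def distTo {m n : ℕ} (C : Set (Mat m n)) (X : Mat m n) : ℝ :=
  sInf ((fun Z => ‖X - Z‖) '' C)

/-- The polar cone of `C`. -/
def polarCone {m n : ℕ} (C : Set (Mat m n)) : Set (Mat m n) :=
  {Y | ∀ X ∈ C, froInner X Y ≤ 0}

/-! With `P = X X†` and `Q = X† X`, the Penrose equations give `Xᵀ P = Xᵀ` and `Q Xᵀ = Xᵀ`.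
Hence `(I - P) Z (I - Q)` is annihilated by `Xᵀ` on both sides, which makes it
Frobenius-orthogonal to every `A X + X B`, while `P Z + Z Q - P Z Q = ((I - P) Z X†) X + X (X† Z)`
lies in that subspace; the two pieces sum to `Z`.
-/

section PenroseIdentities

variable {R : Type*} {ι κ : Type*} [Fintype ι] [Fintype κ]

lemma transpose_mul_mul_pinv_eq [CommRing R] {X : Matrix ι κ R} {Y : Matrix κ ι R}
    (h1 : X * Y * X = X) (h3 : (X * Y)ᵀ = X * Y) : Xᵀ * (X * Y) = Xᵀ := by
  rw [← h3, ← transpose_mul, h1]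

lemma pinv_mul_mul_transpose_eq [CommRing R] {X : Matrix ι κ R} {Y : Matrix κ ι R}
    (h1 : X * Y * X = X) (h4 : (Y * X)ᵀ = Y * X) : Y * X * Xᵀ = Xᵀ := by
  rw [← h4, ← transpose_mul, ← Matrix.mul_assoc, h1]

lemma transpose_mul_one_sub_mul_pinv_eq_zero [CommRing R] [DecidableEq ι]
    {X : Matrix ι κ R} {Y : Matrix κ ι R} (h1 : X * Y * X = X) (h3 : (X * Y)ᵀ = X * Y) :
    Xᵀ * (1 - X * Y) = 0 := by
  rw [Matrix.mul_sub, Matrix.mul_one, transpose_mul_mul_pinv_eq h1 h3, sub_self]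

lemma one_sub_pinv_mul_mul_transpose_eq_zero [CommRing R] [DecidableEq κ]
    {X : Matrix ι κ R} {Y : Matrix κ ι R} (h1 : X * Y * X = X) (h4 : (Y * X)ᵀ = Y * X) :
    (1 - Y * X) * Xᵀ = 0 := by
  rw [Matrix.sub_mul, Matrix.one_mul, pinv_mul_mul_transpose_eq h1 h4, sub_self]

variable [Ring R] [DecidableEq ι] (X : Matrix ι κ R) (Y : Matrix κ ι R)
  (Z : Matrix ι κ R)

lemma tangentProj_eq_mul_add_mul :
    X * Y * Z + Z * (Y * X) - X * Y * Z * (Y * X) = ((1 - X * Y) * Z * Y) * X + X * (Y * Z) := by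
  rw [Matrix.sub_mul, Matrix.one_mul, Matrix.sub_mul, Matrix.sub_mul, Matrix.mul_assoc Z Y X,
    Matrix.mul_assoc (X * Y * Z) Y X, ← Matrix.mul_assoc X Y Z]
  abel

variable [DecidableEq κ]

lemma sub_tangentProj_eq :
    Z - (X * Y * Z + Z * (Y * X) - X * Y * Z * (Y * X)) = (1 - X * Y) * Z * (1 - Y * X) := by
  rw [Matrix.sub_mul, Matrix.one_mul, Matrix.mul_sub, Matrix.mul_one, Matrix.sub_mul]
  abel

end PenroseIdentities

lemma froInner_mul_add_mul_eq_zero {m n : ℕ} {W X : Mat m n} (hl : Xᵀ * W = 0)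
    (hr : W * Xᵀ = 0) (A : Matrix (Fin m) (Fin m) ℝ) (B : Matrix (Fin n) (Fin n) ℝ) :
    froInner W (A * X + X * B) = 0 := by
  rw [froInner, transpose_add, transpose_mul, transpose_mul, Matrix.add_mul, trace_add,
    Matrix.mul_assoc Xᵀ, trace_mul_comm, Matrix.mul_assoc, hr, Matrix.mul_assoc, hl,
    Matrix.mul_zero, Matrix.mul_zero, trace_zero, trace_zero, add_zero]

lemma froInner_normalProj_mul_add_mul_eq_zero {m n : ℕ} {X : Mat m n}
    {Xd : Matrix (Fin n) (Fin m) ℝ} (h1 : X * Xd * X = X) (h3 : (X * Xd)ᵀ = X * Xd)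
    (h4 : (Xd * X)ᵀ = Xd * X) (Z : Mat m n) (A : Matrix (Fin m) (Fin m) ℝ)
    (B : Matrix (Fin n) (Fin n) ℝ) :
    froInner ((1 - X * Xd) * Z * (1 - Xd * X)) (A * X + X * B) = 0 := by
  refine froInner_mul_add_mul_eq_zero ?_ ?_ A B
  · rw [← Matrix.mul_assoc, ← Matrix.mul_assoc, transpose_mul_one_sub_mul_pinv_eq_zero h1 h3,
      Matrix.zero_mul, Matrix.zero_mul]
  · rw [Matrix.mul_assoc, one_sub_pinv_mul_mul_transpose_eq_zero h1 h4, Matrix.mul_zero]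

theorem stmt11_general {m n : ℕ} (X : Mat m n) (Xd : Matrix (Fin n) (Fin m) ℝ)
    (h1 : X * Xd * X = X)
    (h3 : (X * Xd)ᵀ = X * Xd) (h4 : (Xd * X)ᵀ = Xd * X) (Z : Mat m n) :
    ((∃ A : Matrix (Fin m) (Fin m) ℝ, ∃ B : Matrix (Fin n) (Fin n) ℝ,
        X * Xd * Z + Z * (Xd * X) - X * Xd * Z * (Xd * X) = A * X + X * B) ∧
     (∀ (A : Matrix (Fin m) (Fin m) ℝ) (B : Matrix (Fin n) (Fin n) ℝ),
        froInner (Z - (X * Xd * Z + Z * (Xd * X) - X * Xd * Z * (Xd * X))) (A * X + X * B) = 0)) ∧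
    ((∀ (A : Matrix (Fin m) (Fin m) ℝ) (B : Matrix (Fin n) (Fin n) ℝ),
        froInner ((1 - X * Xd) * Z * (1 - Xd * X)) (A * X + X * B) = 0) ∧
     (∃ A : Matrix (Fin m) (Fin m) ℝ, ∃ B : Matrix (Fin n) (Fin n) ℝ,
        Z - (1 - X * Xd) * Z * (1 - Xd * X) = A * X + X * B)) := by
  have hdecomp := tangentProj_eq_mul_add_mul X Xd Z
  have hres := sub_tangentProj_eq X Xd Z
  have horth := froInner_normalProj_mul_add_mul_eq_zero h1 h3 h4 Z
  refine ⟨⟨⟨_, _, hdecomp⟩, fun A B => ?_⟩, horth, ⟨(1 - X * Xd) * Z * Xd, Xd * Z, ?_⟩⟩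
  · rw [hres]
    exact horth A B
  · rw [← hres, sub_sub_cancel, hdecomp]

theorem stmt11 {m n : ℕ} (X : Mat m n) (Xd : Matrix (Fin n) (Fin m) ℝ)
    (h1 : X * Xd * X = X) (h2 : Xd * X * Xd = Xd)
    (h3 : (X * Xd)ᵀ = X * Xd) (h4 : (Xd * X)ᵀ = Xd * X) (Z : Mat m n) :
    ((∃ A : Matrix (Fin m) (Fin m) ℝ, ∃ B : Matrix (Fin n) (Fin n) ℝ,
        X * Xd * Z + Z * (Xd * X) - X * Xd * Z * (Xd * X) = A * X + X * B) ∧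
     (∀ (A : Matrix (Fin m) (Fin m) ℝ) (B : Matrix (Fin n) (Fin n) ℝ),
        froInner (Z - (X * Xd * Z + Z * (Xd * X) - X * Xd * Z * (Xd * X))) (A * X + X * B) = 0)) ∧
    ((∀ (A : Matrix (Fin m) (Fin m) ℝ) (B : Matrix (Fin n) (Fin n) ℝ),
        froInner ((1 - X * Xd) * Z * (1 - Xd * X)) (A * X + X * B) = 0) ∧
     (∃ A : Matrix (Fin m) (Fin m) ℝ, ∃ B : Matrix (Fin n) (Fin n) ℝ,
        Z - (1 - X * Xd) * Z * (1 - Xd * X) = A * X + X * B)) :=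
  stmt11_general X Xd h1 h3 h4 Z
end

section
/- Let X ∈ ℝ^{m×n} and Z ∈ ℝ^{m×n}. A nearest point (in Frobenius norm) to Z in the set ℝ^{m×m}X ∪ Xℝ^{n×n} is XX†Z if ‖XX†Z‖ ≥ ‖ZX†X‖ and ZX†X otherwise, where X† is the Moore–Penrose inverse. -/
/-!
`P = X X†` and `Q = X† X` are symmetric idempotents. Every `X B` is fixed by `P`, and for such `V`
Pythagoras gives `‖Z - V‖² = ‖Z - P Z‖² + ‖P Z - V‖²`, so `P Z = X (X† Z)` is a nearest point of
`X ℝ^{n×n}`, at squared distance `‖Z‖² - ‖P Z‖²`; symmetrically `Z Q` is a nearest point of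
`ℝ^{m×m} X`. A nearest point of the union is the nearer of the two, i.e. the one of larger norm.
-/

open Matrix

attribute [local instance] Matrix.frobeniusNormedAddCommGroup Matrix.frobeniusNormedSpace

section Frobenius

variable {ι κ : Type*} [Fintype ι] [Fintype κ]

theorem frobenius_norm_sq_eq_trace (A : Matrix ι κ ℝ) : ‖A‖ ^ 2 = trace (Aᵀ * A) := by
  rw [frobenius_norm_def, ← Real.rpow_natCast, ← Real.rpow_mul (by positivity)]
  norm_num [trace, mul_apply, sq]
  exact Finset.sum_comm

theorem frobenius_norm_add_sq_of_trace_eq_zero (A B : Matrix ι κ ℝ) (h : trace (Bᵀ * A) = 0) :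
    ‖A + B‖ ^ 2 = ‖A‖ ^ 2 + ‖B‖ ^ 2 := by
  have h' : trace (Aᵀ * B) = 0 := by rw [← trace_transpose, transpose_mul, transpose_transpose, h]
  rw [frobenius_norm_sq_eq_trace, transpose_add, Matrix.add_mul, Matrix.mul_add, Matrix.mul_add,
    trace_add, trace_add, trace_add, h, h', frobenius_norm_sq_eq_trace, frobenius_norm_sq_eq_trace]
  ring

theorem frobenius_norm_sub_sq_of_mul_eq_self {P : Matrix ι ι ℝ} (hP : IsIdempotentElem P)
    (hPs : P.IsSymm) {V : Matrix ι κ ℝ} (hV : P * V = V) (Z : Matrix ι κ ℝ) :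
    ‖Z - V‖ ^ 2 = ‖Z - P * Z‖ ^ 2 + ‖P * Z - V‖ ^ 2 := by
  have hfix : P * (P * Z - V) = P * Z - V := by
    rw [Matrix.mul_sub, ← Matrix.mul_assoc, hP.eq, hV]
  have hkill : P * (Z - P * Z) = 0 := by
    rw [Matrix.mul_sub, ← Matrix.mul_assoc, hP.eq, sub_self]
  have horth : trace ((P * Z - V)ᵀ * (Z - P * Z)) = 0 := by
    rw [← hfix, transpose_mul, hPs.eq, Matrix.mul_assoc, hkill, Matrix.mul_zero, trace_zero]
  rw [← frobenius_norm_add_sq_of_trace_eq_zero _ _ horth, sub_add_sub_cancel]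

theorem frobenius_norm_sub_sq_of_mul_eq_self' {Q : Matrix κ κ ℝ} (hQ : IsIdempotentElem Q)
    (hQs : Q.IsSymm) {V : Matrix ι κ ℝ} (hV : V * Q = V) (Z : Matrix ι κ ℝ) :
    ‖Z - V‖ ^ 2 = ‖Z - Z * Q‖ ^ 2 + ‖Z * Q - V‖ ^ 2 := by
  have hVt : Q * Vᵀ = Vᵀ := by rw [← hQs.eq, ← transpose_mul, hV]
  have hZt : Q * Zᵀ = (Z * Q)ᵀ := by rw [transpose_mul, hQs.eq]
  have := frobenius_norm_sub_sq_of_mul_eq_self hQ hQs hVt Zᵀ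
  rwa [hZt, ← transpose_sub, ← transpose_sub, ← transpose_sub, frobenius_norm_transpose,
    frobenius_norm_transpose, frobenius_norm_transpose] at this

theorem frobenius_norm_sub_mul_sq {P : Matrix ι ι ℝ} (hP : IsIdempotentElem P) (hPs : P.IsSymm)
    (Z : Matrix ι κ ℝ) : ‖Z - P * Z‖ ^ 2 = ‖Z‖ ^ 2 - ‖P * Z‖ ^ 2 := by
  have := frobenius_norm_sub_sq_of_mul_eq_self hP hPs (Matrix.mul_zero P) Z
  rw [sub_zero, sub_zero] at this
  linarith

theorem frobenius_norm_sub_mul_sq' {Q : Matrix κ κ ℝ} (hQ : IsIdempotentElem Q) (hQs : Q.IsSymm)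
    (Z : Matrix ι κ ℝ) : ‖Z - Z * Q‖ ^ 2 = ‖Z‖ ^ 2 - ‖Z * Q‖ ^ 2 := by
  have := frobenius_norm_sub_sq_of_mul_eq_self' hQ hQs (Matrix.zero_mul Q) Z
  rw [sub_zero, sub_zero] at this
  linarith

end Frobenius

theorem mem_projSet_union_of_le {m n : ℕ} {C₁ C₂ : Set (Mat m n)} {Z Y₁ Y₂ : Mat m n}
    (h₁ : Y₁ ∈ projSet C₁ Z) (h₂ : Y₂ ∈ projSet C₂ Z) (h : ‖Z - Y₁‖ ≤ ‖Z - Y₂‖) :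
    Y₁ ∈ projSet (C₁ ∪ C₂) Z := by
  refine ⟨Or.inl h₁.1, ?_⟩
  rintro W (hW | hW)
  · exact h₁.2 W hW
  · exact h.trans (h₂.2 W hW)

theorem mul_mem_projSet {m n : ℕ} {P : Matrix (Fin m) (Fin m) ℝ} (hP : IsIdempotentElem P)
    (hPs : P.IsSymm) {C : Set (Mat m n)} (hC : ∀ W ∈ C, P * W = W) {Z : Mat m n}
    (hZ : P * Z ∈ C) : P * Z ∈ projSet C Z := by
  refine ⟨hZ, fun W hW => ?_⟩
  have := frobenius_norm_sub_sq_of_mul_eq_self hP hPs (hC W hW) Z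
  exact le_of_sq_le_sq (this ▸ le_add_of_nonneg_right (sq_nonneg _)) (norm_nonneg _)

theorem mul_mem_projSet' {m n : ℕ} {Q : Matrix (Fin n) (Fin n) ℝ} (hQ : IsIdempotentElem Q)
    (hQs : Q.IsSymm) {C : Set (Mat m n)} (hC : ∀ W ∈ C, W * Q = W) {Z : Mat m n}
    (hZ : Z * Q ∈ C) : Z * Q ∈ projSet C Z := by
  refine ⟨hZ, fun W hW => ?_⟩
  have := frobenius_norm_sub_sq_of_mul_eq_self' hQ hQs (hC W hW) Z
  exact le_of_sq_le_sq (this ▸ le_add_of_nonneg_right (sq_nonneg _)) (norm_nonneg _)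

theorem stmt12_general {m n : ℕ} (X : Mat m n) (Xd : Matrix (Fin n) (Fin m) ℝ)
    (h1 : X * Xd * X = X)
    (h3 : (X * Xd)ᵀ = X * Xd) (h4 : (Xd * X)ᵀ = Xd * X) (Z : Mat m n) :
    (‖X * Xd * Z‖ ≥ ‖Z * (Xd * X)‖ →
      X * Xd * Z ∈ projSet
        ({W | ∃ A : Matrix (Fin m) (Fin m) ℝ, W = A * X} ∪
         {W | ∃ B : Matrix (Fin n) (Fin n) ℝ, W = X * B}) Z) ∧
    (‖X * Xd * Z‖ < ‖Z * (Xd * X)‖ →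
      Z * (Xd * X) ∈ projSet
        ({W | ∃ A : Matrix (Fin m) (Fin m) ℝ, W = A * X} ∪
         {W | ∃ B : Matrix (Fin n) (Fin n) ℝ, W = X * B}) Z) := by
  have hP : IsIdempotentElem (X * Xd) := by
    rw [IsIdempotentElem, ← Matrix.mul_assoc, h1]
  have hQ : IsIdempotentElem (Xd * X) := by
    rw [IsIdempotentElem, Matrix.mul_assoc, ← Matrix.mul_assoc X, h1]
  have hright : X * Xd * Z ∈ projSet {W | ∃ B : Matrix (Fin n) (Fin n) ℝ, W = X * B} Z :=
    mul_mem_projSet hP h3 (by rintro _ ⟨B, rfl⟩; rw [← Matrix.mul_assoc, h1])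
      ⟨Xd * Z, Matrix.mul_assoc X Xd Z⟩
  have hleft : Z * (Xd * X) ∈ projSet {W | ∃ A : Matrix (Fin m) (Fin m) ℝ, W = A * X} Z :=
    mul_mem_projSet' hQ h4
      (by rintro _ ⟨A, rfl⟩; rw [Matrix.mul_assoc, ← Matrix.mul_assoc X, h1])
      ⟨Z * Xd, (Matrix.mul_assoc Z Xd X).symm⟩
  have hdist : ‖Z - X * Xd * Z‖ ≤ ‖Z - Z * (Xd * X)‖ ↔ ‖Z * (Xd * X)‖ ≤ ‖X * Xd * Z‖ := by
    rw [← sq_le_sq₀ (norm_nonneg _) (norm_nonneg _), ← sq_le_sq₀ (norm_nonneg _) (norm_nonneg _),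
      frobenius_norm_sub_mul_sq hP h3, frobenius_norm_sub_mul_sq' hQ h4]
    exact sub_le_sub_iff_left _
  refine ⟨fun h => ?_, fun h => ?_⟩
  · rw [Set.union_comm]
    exact mem_projSet_union_of_le hright hleft (hdist.2 h)
  · exact mem_projSet_union_of_le hleft hright (le_of_not_ge (mt hdist.1 h.not_ge))

theorem stmt12 {m n : ℕ} (X : Mat m n) (Xd : Matrix (Fin n) (Fin m) ℝ)
    (h1 : X * Xd * X = X) (h2 : Xd * X * Xd = Xd)
    (h3 : (X * Xd)ᵀ = X * Xd) (h4 : (Xd * X)ᵀ = Xd * X) (Z : Mat m n) :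
    (‖X * Xd * Z‖ ≥ ‖Z * (Xd * X)‖ →
      X * Xd * Z ∈ projSet
        ({W | ∃ A : Matrix (Fin m) (Fin m) ℝ, W = A * X} ∪
         {W | ∃ B : Matrix (Fin n) (Fin n) ℝ, W = X * B}) Z) ∧
    (‖X * Xd * Z‖ < ‖Z * (Xd * X)‖ →
      Z * (Xd * X) ∈ projSet
        ({W | ∃ A : Matrix (Fin m) (Fin m) ℝ, W = A * X} ∪
         {W | ∃ B : Matrix (Fin n) (Fin n) ℝ, W = X * B}) Z) :=
  stmt12_general X Xd h1 h3 h4 Z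
end

section
/- Let C ⊆ ℝ^{m×n} be a closed cone with polar C* = {0}, contained in the set of matrices of rank at most r − r̲, and let κ₁ = min_{‖Y‖=1} ‖P_C(Y)‖². Let X have rank r̲ < r and G ∈ P_C(−∇f(X)). Then ⟨G, −∇f(X)⟩ = ‖G‖² ≥ κ₁‖∇f(X)‖²; moreover rank(X + αG) ≤ r for all α ≥ 0. -/
open Matrix

attribute [local instance] Matrix.frobeniusNormedAddCommGroup Matrix.frobeniusNormedSpace

lemma froInner_eq_sum {m n : ℕ} (X Y : Mat m n) :
    froInner X Y = ∑ j, ∑ i, X i j * Y i j := by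
  simp [froInner, Matrix.trace, Matrix.diag, Matrix.mul_apply, mul_comm]

lemma norm_sq_eq {m n : ℕ} (A : Mat m n) : ‖A‖ ^ 2 = ∑ i, ∑ j, (A i j) ^ 2 := by
  have hnn : (0:ℝ) ≤ ∑ i, ∑ j, ‖A i j‖ ^ (2:ℝ) := by positivity
  rw [Matrix.frobenius_norm_def, ← Real.rpow_natCast _ 2, ← Real.rpow_mul hnn]
  rw [show (1/2:ℝ) * ((2:ℕ):ℝ) = 1 by norm_num, Real.rpow_one]
  refine Finset.sum_congr rfl fun i _ => Finset.sum_congr rfl fun j _ => ?_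
  rw [show (2:ℝ) = ((2:ℕ):ℝ) by norm_num, Real.rpow_natCast, Real.norm_eq_abs, sq_abs]

lemma norm_sub_sq' {m n : ℕ} (A B : Mat m n) :
    ‖A - B‖ ^ 2 = ‖A‖ ^ 2 - 2 * froInner A B + ‖B‖ ^ 2 := by
  simp only [norm_sq_eq, froInner_eq_sum, Matrix.sub_apply]
  rw [Finset.sum_comm (s := Finset.univ) (t := Finset.univ) (f := fun j i => A i j * B i j)]
  simp only [← Finset.sum_add_distrib, ← Finset.sum_sub_distrib, Finset.mul_sum]
  congr 1; ext i; congr 1; ext j; ring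

/-- projection onto cone: inner product identity -/
lemma proj_inner {m n : ℕ} {C : Set (Mat m n)} (hcone : IsConeSet C)
    {Z G : Mat m n} (hG : G ∈ projSet C Z) : froInner G Z = ‖G‖ ^ 2 := by
  obtain ⟨hGC, hmin⟩ := hG
  have key : ∀ c : ℝ, 0 ≤ c → ‖Z - G‖ ^ 2 ≤ ‖Z - c • G‖ ^ 2 := by
    intro c hc
    have := hmin (c • G) (hcone G hGC c hc)
    exact pow_le_pow_left₀ (norm_nonneg _) this 2
  have hinnerZG : froInner Z G = froInner G Z := by
    simp [froInner_eq_sum, mul_comm]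
  have expand : ∀ c : ℝ, froInner Z (c • G) = c * froInner Z G := by
    intro c; simp [froInner_eq_sum, Matrix.smul_apply, smul_eq_mul, Finset.mul_sum]; ring_nf
    congr 1; ext j; congr 1; ext i; ring
  have normsmul : ∀ c : ℝ, ‖(c • G : Mat m n)‖ ^ 2 = c ^ 2 * ‖G‖ ^ 2 := by
    intro c; simp [norm_sq_eq, Matrix.smul_apply, smul_eq_mul, Finset.mul_sum]; congr 1
    ext i; congr 1; ext j; ring
  set s := ‖G‖ ^ 2 with hs
  set p := froInner Z G with hp
  have hkey : ∀ c : ℝ, 0 ≤ c → -2 * p + s ≤ -2 * c * p + c ^ 2 * s := by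
    intro c hc
    have h := key c hc
    rw [norm_sub_sq', norm_sub_sq', expand, normsmul] at h
    linarith
  have hsnn : 0 ≤ s := by positivity
  rcases eq_or_lt_of_le hsnn with h0 | hspos
  · -- s = 0 means G = 0
    have hG0 : G = 0 := by
      have : ‖G‖ = 0 := by nlinarith [norm_nonneg G]
      exact norm_eq_zero.mp this
    subst hG0
    rw [← h0]
    simp [froInner_eq_sum]
  · have h0 := hkey 0 le_rfl
    have hps : s ≤ 2 * p := by linarith
    have hppos : 0 < p := by linarith
    have hc := hkey (p / s) (by positivity)
    have hpeq : p = s := by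
      have h3 := mul_le_mul_of_nonneg_right hc hspos.le
      have h4 : (-2 * (p / s) * p + (p / s) ^ 2 * s) * s = -p ^ 2 := by
        field_simp; ring
      rw [h4] at h3
      nlinarith [sq_nonneg (p - s)]
    rw [← hinnerZG]; exact hpeq

lemma rank_add_le' {m n : ℕ} (A B : Mat m n) : (A + B).rank ≤ A.rank + B.rank := by
  have hr : LinearMap.range (A + B).mulVecLin ≤
      LinearMap.range A.mulVecLin ⊔ LinearMap.range B.mulVecLin := by
    rintro x ⟨y, rfl⟩
    rw [Matrix.mulVecLin_add]
    exact Submodule.add_mem_sup ⟨y, rfl⟩ ⟨y, rfl⟩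
  calc (A + B).rank ≤ Module.finrank ℝ
        ↥(LinearMap.range A.mulVecLin ⊔ LinearMap.range B.mulVecLin) :=
          Submodule.finrank_mono hr
    _ ≤ A.rank + B.rank := Submodule.finrank_add_le_finrank_add_finrank _ _

lemma proj_smul {m n : ℕ} {C : Set (Mat m n)} (hcone : IsConeSet C)
    {Z G : Mat m n} (hG : G ∈ projSet C Z) {c : ℝ} (hc : 0 < c) :
    c • G ∈ projSet C (c • Z) := by
  obtain ⟨hGC, hmin⟩ := hG
  refine ⟨hcone G hGC c hc.le, fun W hW => ?_⟩
  have hW' : c⁻¹ • W ∈ C := hcone W hW c⁻¹ (by positivity)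
  have h := hmin _ hW'
  have e1 : c • Z - c • G = c • (Z - G) := by rw [smul_sub]
  have e2 : c • Z - W = c • (Z - c⁻¹ • W) := by
    rw [smul_sub, smul_inv_smul₀ hc.ne']
  rw [e1, e2, norm_smul, norm_smul]
  exact mul_le_mul_of_nonneg_left h (norm_nonneg _)

theorem stmt19 {m n : ℕ} (r : ℕ) (f : Mat m n → ℝ) (g : Mat m n → Mat m n)
    (Df : Mat m n → (Mat m n →L[ℝ] ℝ))
    (hdiff : ∀ W, HasFDerivAt f (Df W) W)
    (hgrad : ∀ W Y, Df W Y = froInner Y (g W))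
    (C : Set (Mat m n)) (hclosed : IsClosed C) (hcone : IsConeSet C)
    (hpolar : polarCone C = {0})
    (X : Mat m n) (hrank : X.rank < r)
    (hCrank : C ⊆ {W : Mat m n | W.rank ≤ r - X.rank})
    (k1 : ℝ)
    (hk1 : IsLeast {t : ℝ | ∃ Y : Mat m n, ‖Y‖ = 1 ∧ ∃ W ∈ projSet C Y, t = ‖W‖ ^ 2} k1)
    (G : Mat m n) (hG : G ∈ projSet C (-(g X))) :
    froInner G (-(g X)) = ‖G‖ ^ 2 ∧
    k1 * ‖g X‖ ^ 2 ≤ ‖G‖ ^ 2 ∧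
    ∀ a : ℝ, 0 ≤ a → (X + a • G).rank ≤ r := by
  refine ⟨proj_inner hcone hG, ?_, ?_⟩
  · rcases eq_or_ne (g X) 0 with h0 | h0
    · have hk1nn : 0 ≤ k1 := by
        obtain ⟨Y, _, W, _, ht⟩ := hk1.1
        rw [ht]; positivity
      have hz : ‖g X‖ = 0 := by rw [h0, norm_zero]
      rw [hz]
      nlinarith [sq_nonneg ‖G‖]
    · set Z := -(g X) with hZ
      have hZne : Z ≠ 0 := by simpa [hZ] using h0
      have hZpos : 0 < ‖Z‖ := norm_pos_iff.mpr hZne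
      set c := ‖Z‖⁻¹ with hc
      have hcpos : 0 < c := by positivity
      have hY : ‖c • Z‖ = 1 := by
        rw [norm_smul, Real.norm_eq_abs, abs_of_pos hcpos, hc]
        exact inv_mul_cancel₀ hZpos.ne'
      have hWproj : c • G ∈ projSet C (c • Z) := proj_smul hcone hG hcpos
      have hle : k1 ≤ ‖c • G‖ ^ 2 := hk1.2 ⟨c • Z, hY, c • G, hWproj, rfl⟩
      have hnorm : ‖c • G‖ ^ 2 = c ^ 2 * ‖G‖ ^ 2 := by
        rw [norm_smul, Real.norm_eq_abs, abs_of_pos hcpos, mul_pow]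
      have hgZ : ‖g X‖ = ‖Z‖ := (norm_neg _).symm
      rw [hgZ]
      rw [hnorm] at hle
      have := mul_le_mul_of_nonneg_right hle (by positivity : (0:ℝ) ≤ ‖Z‖ ^ 2)
      calc k1 * ‖Z‖ ^ 2 ≤ c ^ 2 * ‖G‖ ^ 2 * ‖Z‖ ^ 2 := this
        _ = ‖G‖ ^ 2 := by
          rw [mul_right_comm, ← mul_pow, hc, inv_mul_cancel₀ hZpos.ne', one_pow, one_mul]
  · intro a ha
    have haG : a • G ∈ C := hcone G hG.1 a ha
    have h1 : (a • G).rank ≤ r - X.rank := hCrank haG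
    have h2 := rank_add_le' X (a • G)
    omega
end
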